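/- Let $f : [0,\Delta t] \to \mathbb{R}$ be $(p+1)$-times continuously differentiable with $f^{(j)}(0) = 0$ for $j = 0,\dots,p-1$, and let $\widetilde{C} = \max_{\xi \in [0,\Delta t]} |f^{(p+1)}(\xi)|$. Then $\left| \int_0^{\Delta t} f(\tau)\,d\tau - \frac{\Delta t}{p+1} f(\Delta t) \right| \le \frac{2p+3}{(p+2)!(p+1)} \widetilde{C}\, \Delta t^{p+2}$. -/

import Mathlib

/-!
Let `K = f⁽ᵖ⁾(0) / p!`. Since the lower derivatives of `f` vanish at `0`, Taylor's theorem
with the Lagrange remainder gives `|f τ - K τ ^ p| ≤ C̃ τ ^ (p + 1) / (p + 1)!` on `[0, Δt]`.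
The rule `∫₀^Δt g ≈ Δt / (p + 1) · g Δt` is linear and exact on `τ ^ p`, so its error on `f`
equals its error on `f - K τ ^ p`; bounding the integral and the endpoint term separately
gives `C̃ Δt ^ (p + 2) / (p + 1)! · (1 / (p + 2) + 1 / (p + 1))`, which is the claimed constant.
-/

open Set Nat MeasureTheory

theorem iteratedDerivWithin_Icc_of_lt {f : ℝ → ℝ} {a b c x : ℝ} (hx : x < c) (hcb : c ≤ b)
    (n : ℕ) : iteratedDerivWithin n f (Icc a c) x = iteratedDerivWithin n f (Icc a b) x := by
  have hset : Icc a c =ᶠ[nhds x] Icc a b := by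
    rw [Filter.eventuallyEq_set]
    filter_upwards [Iio_mem_nhds hx] with y hy
    exact ⟨fun h => ⟨h.1, h.2.trans hcb⟩, fun h => ⟨h.1, le_of_lt hy⟩⟩
  simp only [iteratedDerivWithin_eq_iteratedFDerivWithin, iteratedFDerivWithin_congr_set hset n]

theorem taylorWithinEval_Icc_of_lt {f : ℝ → ℝ} {a b c : ℝ} (hac : a < c) (hcb : c ≤ b)
    (n : ℕ) :
    taylorWithinEval f n (Icc a c) a = taylorWithinEval f n (Icc a b) a := by
  funext x
  simp only [taylor_within_apply, iteratedDerivWithin_Icc_of_lt hac hcb]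

theorem taylorWithinEval_eq_of_iteratedDerivWithin_eq_zero {f : ℝ → ℝ} {n : ℕ} {s : Set ℝ}
    {x₀ : ℝ} (h : ∀ k < n, iteratedDerivWithin k f s x₀ = 0) (x : ℝ) :
    taylorWithinEval f n s x₀ x = iteratedDerivWithin n f s x₀ * (x - x₀) ^ n / n ! := by
  rw [taylor_within_apply, Finset.sum_range_succ,
    Finset.sum_eq_zero fun k hk => by rw [h k (Finset.mem_range.1 hk), smul_zero],
    zero_add, smul_eq_mul]
  ring

theorem abs_sub_taylorWithinEval_Icc_le {f : ℝ → ℝ} {a b C x : ℝ} {n : ℕ}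
    (hf : ContDiffOn ℝ (n + 1) f (Icc a b)) (hx : x ∈ Icc a b)
    (hC : ∀ y ∈ Icc a b, |iteratedDerivWithin (n + 1) f (Icc a b) y| ≤ C) :
    |f x - taylorWithinEval f n (Icc a b) a x| ≤ C * (x - a) ^ (n + 1) / (n + 1)! := by
  rcases hx.1.eq_or_lt with rfl | hax
  · simp [taylorWithinEval_self]
  have hsub : Icc a x ⊆ Icc a b := Icc_subset_Icc_right hx.2
  have hfx : ContDiffOn ℝ (n + 1) f (Icc a x) := hf.mono hsub
  have hf' : DifferentiableOn ℝ (iteratedDerivWithin n f (Icc a x)) (Ioo a x) :=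
    (hfx.differentiableOn_iteratedDerivWithin (by exact_mod_cast n.lt_succ_self)
      (uniqueDiffOn_Icc hax)).mono Ioo_subset_Icc_self
  obtain ⟨x', hx', hrem⟩ := taylor_mean_remainder_lagrange (n := n) hax.ne
    (by rw [uIcc_of_le hax.le]; exact hfx.of_succ)
    (by rwa [uIcc_of_le hax.le, uIoo_of_le hax.le])
  rw [uIoo_of_le hax.le] at hx'
  rw [uIcc_of_le hax.le, taylorWithinEval_Icc_of_lt hax hx.2,
    iteratedDerivWithin_Icc_of_lt hx'.2 hx.2] at hrem
  rw [hrem, abs_div, abs_mul, abs_pow, abs_of_nonneg (sub_nonneg.2 hx.1), Nat.abs_cast]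
  gcongr
  exact hC x' (hsub (Ioo_subset_Icc_self hx'))

theorem abs_intervalIntegral_le_of_abs_le_mul_pow {g : ℝ → ℝ} {Δt M : ℝ} {q : ℕ}
    (hΔt : 0 ≤ Δt) (hg : ∀ τ ∈ Icc 0 Δt, |g τ| ≤ M * τ ^ q) :
    |∫ τ in (0 : ℝ)..Δt, g τ| ≤ M * Δt ^ (q + 1) / (q + 1) := by
  calc |∫ τ in (0 : ℝ)..Δt, g τ|
      ≤ ∫ τ in (0 : ℝ)..Δt, M * τ ^ q := by
        refine intervalIntegral.norm_integral_le_of_norm_le hΔt (Filter.Eventually.of_forall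
          fun τ hτ => (Real.norm_eq_abs _).trans_le (hg τ (Ioc_subset_Icc_self hτ))) ?_
        apply Continuous.intervalIntegrable
        fun_prop
    _ = M * Δt ^ (q + 1) / (q + 1) := by
        rw [intervalIntegral.integral_const_mul, integral_pow]
        ring

noncomputable def quadratureError (p : ℕ) (Δt : ℝ) (g : ℝ → ℝ) : ℝ :=
  (∫ τ in (0 : ℝ)..Δt, g τ) - Δt / (p + 1) * g Δt

theorem quadratureError_sub {p : ℕ} {Δt : ℝ} {g h : ℝ → ℝ}
    (hg : IntervalIntegrable g volume 0 Δt) (hh : IntervalIntegrable h volume 0 Δt) :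
    quadratureError p Δt (fun τ => g τ - h τ) =
      quadratureError p Δt g - quadratureError p Δt h := by
  simp only [quadratureError, intervalIntegral.integral_sub hg hh]
  ring

theorem quadratureError_const_mul_pow (p : ℕ) (Δt c : ℝ) :
    quadratureError p Δt (fun τ => c * τ ^ p) = 0 := by
  rw [quadratureError, intervalIntegral.integral_const_mul, integral_pow]
  field_simp
  ring

theorem abs_quadratureError_le {p : ℕ} {Δt M : ℝ} {g : ℝ → ℝ} (hΔt : 0 ≤ Δt)
    (hg : ∀ τ ∈ Icc 0 Δt, |g τ| ≤ M * τ ^ (p + 1)) :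
    |quadratureError p Δt g| ≤ (2 * p + 3) / ((p + 1) * (p + 2)) * M * Δt ^ (p + 2) := by
  have hint := abs_intervalIntegral_le_of_abs_le_mul_pow hΔt hg
  have hend : Δt / (p + 1) * |g Δt| ≤ Δt / (p + 1) * (M * Δt ^ (p + 1)) := by
    gcongr
    exact hg Δt ⟨hΔt, le_rfl⟩
  calc |quadratureError p Δt g|
      ≤ |∫ τ in (0 : ℝ)..Δt, g τ| + |Δt / (p + 1) * g Δt| := abs_sub _ _
    _ = |∫ τ in (0 : ℝ)..Δt, g τ| + Δt / (p + 1) * |g Δt| := by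
        rw [abs_mul, abs_of_nonneg (by positivity : 0 ≤ Δt / (p + 1))]
    _ ≤ M * Δt ^ (p + 1 + 1) / ((p + 1 : ℕ) + 1) + Δt / (p + 1) * (M * Δt ^ (p + 1)) :=
        add_le_add hint hend
    _ = (2 * p + 3) / ((p + 1) * (p + 2)) * M * Δt ^ (p + 2) := by
        push_cast
        field_simp
        ring

theorem stmt_2 (p : ℕ) (Δt : ℝ) (hΔt : 0 < Δt) (f : ℝ → ℝ)
    (hf : ContDiffOn ℝ (p + 1) f (Set.Icc 0 Δt))
    (hvanish : ∀ j < p, iteratedDerivWithin j f (Set.Icc 0 Δt) 0 = 0)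
    (Ctil : ℝ)
    (hCtil : Ctil = sSup ((fun ξ => |iteratedDerivWithin (p + 1) f (Set.Icc 0 Δt) ξ|) ''
      Set.Icc 0 Δt)) :
    |(∫ τ in (0 : ℝ)..Δt, f τ) - Δt / (p + 1) * f Δt| ≤
      (2 * p + 3) / (Nat.factorial (p + 2) * (p + 1)) * Ctil * Δt ^ (p + 2) := by
  have hC : ∀ y ∈ Icc 0 Δt, |iteratedDerivWithin (p + 1) f (Icc 0 Δt) y| ≤ Ctil := by
    rw [hCtil]
    exact fun y hy => (hf.continuousOn_iteratedDerivWithin le_rfl (uniqueDiffOn_Icc hΔt)).abs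
      |>.le_sSup_image_Icc hy
  set K := iteratedDerivWithin p f (Icc 0 Δt) 0 / (p ! : ℝ)
  have htaylor : ∀ τ ∈ Icc 0 Δt, |f τ - K * τ ^ p| ≤ Ctil / (p + 1)! * τ ^ (p + 1) := by
    intro τ hτ
    have h := abs_sub_taylorWithinEval_Icc_le hf hτ hC
    rw [taylorWithinEval_eq_of_iteratedDerivWithin_eq_zero hvanish, sub_zero] at h
    convert h using 2 <;> ring
  have hfi : IntervalIntegrable f volume 0 Δt :=
    hf.continuousOn.intervalIntegrable_of_Icc hΔt.le
  have hexact : quadratureError p Δt f = quadratureError p Δt (fun τ => f τ - K * τ ^ p) := by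
    rw [quadratureError_sub hfi (by apply Continuous.intervalIntegrable; fun_prop),
      quadratureError_const_mul_pow, sub_zero]
  calc |quadratureError p Δt f|
      ≤ (2 * p + 3) / ((p + 1) * (p + 2)) * (Ctil / (p + 1)!) * Δt ^ (p + 2) :=
        hexact ▸ abs_quadratureError_le hΔt.le htaylor
    _ = (2 * p + 3) / ((p + 2)! * (p + 1)) * Ctil * Δt ^ (p + 2) := by
        rw [factorial_succ (p + 1)]
        push_cast
        field_simp
        ring
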